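/- arXiv:1507.07064 — 8 statements merged into one kernel-verified Lean document; each statement's English description precedes it below -/
import Mathlib

section
/- Let ≻ be a lexicographic preference over subsets of a finite set M induced by a strict linear order on M, and let A, B, X ⊆ M with X ∩ A = ∅ and X ∩ B = ∅. Then A ≻ B if and only if (A ∪ X) ≻ (B ∪ X). -/
/-- Lexicographic preference over subsets of a linearly ordered finite type. -/
def lexPref {α : Type*} [DecidableEq α] [LinearOrder α] (A B : Finset α) : Prop :=
  ∃ x ∈ A \ B, ∀ y ∈ B \ A, y < x

/-- for `X` disjoint from both `A` and `B`,
`A ≻ B` iff `A ∪ X ≻ B ∪ X`. -/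
theorem lexPref_union_iff {α : Type*} [DecidableEq α] [LinearOrder α] [Fintype α]
    (A B X : Finset α) (hXA : X ∩ A = ∅) (hXB : X ∩ B = ∅) :
    lexPref A B ↔ lexPref (A ∪ X) (B ∪ X) := by
  have h1 : (A ∪ X) \ (B ∪ X) = A \ B := by
    ext a
    simp only [Finset.mem_sdiff, Finset.mem_union]
    constructor
    · rintro ⟨h, hn⟩
      push_neg at hn
      exact ⟨h.resolve_right hn.2, hn.1⟩
    · rintro ⟨ha, hb⟩
      have : a ∉ X := fun hx => by
        have := Finset.eq_empty_iff_forall_notMem.mp hXA a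
        simp [Finset.mem_inter, hx, ha] at this
      exact ⟨Or.inl ha, by push_neg; exact ⟨hb, this⟩⟩
  have h2 : (B ∪ X) \ (A ∪ X) = B \ A := by
    ext a
    simp only [Finset.mem_sdiff, Finset.mem_union]
    constructor
    · rintro ⟨h, hn⟩
      push_neg at hn
      exact ⟨h.resolve_right hn.2, hn.1⟩
    · rintro ⟨ha, hb⟩
      have : a ∉ X := fun hx => by
        have := Finset.eq_empty_iff_forall_notMem.mp hXB a
        simp [Finset.mem_inter, hx, ha] at this
      exact ⟨Or.inl ha, by push_neg; exact ⟨hb, this⟩⟩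
  unfold lexPref
  rw [h1, h2]
end

section
/- Lexicographic preferences are responsive: for disjoint sets, A ∪ B ≻ A ∪ B′ if and only if B ≻ B′, where A is disjoint from both B and B′. -/
lemma sdiff_union_eq {α : Type*} [DecidableEq α] (A B B' : Finset α)
    (hB : A ∩ B = ∅) : (A ∪ B) \ (A ∪ B') = B \ B' := by
  ext x
  simp only [Finset.mem_sdiff, Finset.mem_union, not_or]
  constructor
  · rintro ⟨h1 | h1, h2, h3⟩
    · exact absurd h1 h2
    · exact ⟨h1, h3⟩
  · rintro ⟨h1, h2⟩
    have : x ∉ A := fun hx => by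
      have : x ∈ A ∩ B := Finset.mem_inter.mpr ⟨hx, h1⟩
      simp [hB] at this
    exact ⟨Or.inr h1, this, h2⟩

/-- lexicographic preferences are responsive: for `A` disjoint from
`B` and `B'`, `A ∪ B ≻ A ∪ B'` iff `B ≻ B'`. -/
theorem lexPref_responsive {α : Type*} [DecidableEq α] [LinearOrder α] [Fintype α]
    (A B B' : Finset α) (hB : A ∩ B = ∅) (hB' : A ∩ B' = ∅) :
    lexPref (A ∪ B) (A ∪ B') ↔ lexPref B B' := by
  unfold lexPref
  rw [sdiff_union_eq A B B' hB, sdiff_union_eq A B' B hB']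
end

section
/- An allocation mechanism is group-strategyproof if and only if it is strategyproof and non-bossy. -/
/-- A (strict) preference over bundles of objects. -/
abbrev Pref (O : Type*) := Finset O → Finset O → Prop

/-- Weak preference associated with a strict preference. -/
def wpref {O : Type*} (p : Pref O) (A B : Finset O) : Prop := A = B ∨ p A B

/-- A strict preference: asymmetric, transitive, and total (an antisymmetric
total order over bundles). -/
def StrictPref {O : Type*} (p : Pref O) : Prop :=
  (∀ A B, p A B → ¬ p B A) ∧
  (∀ A B C, p A B → p B C → p A C) ∧
  (∀ A B, A ≠ B → p A B ∨ p B A)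

/-- Strategyproofness, over profiles of strict preferences. -/
def Strategyproof {N O : Type*} [DecidableEq N]
    (π : (N → Pref O) → N → Finset O) : Prop :=
  ∀ (p : N → Pref O), (∀ i, StrictPref (p i)) →
    ∀ (i : N) (p' : Pref O), StrictPref p' →
      wpref (p i) (π p i) (π (Function.update p i p') i)

/-- Non-bossiness, over profiles of strict preferences. -/
def NonBossy {N O : Type*} [DecidableEq N]
    (π : (N → Pref O) → N → Finset O) : Prop :=
  ∀ (p : N → Pref O), (∀ i, StrictPref (p i)) →
    ∀ (i : N) (p' : Pref O), StrictPref p' →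
      π (Function.update p i p') i = π p i → π (Function.update p i p') = π p

/-- Group-strategyproofness: no coalition can jointly misreport so that every
member is weakly better off and some member strictly better off. -/
def GroupStrategyproof {N O : Type*} [DecidableEq N]
    (π : (N → Pref O) → N → Finset O) : Prop :=
  ¬ ∃ (p p' : N → Pref O) (S : Finset N),
      (∀ i, StrictPref (p i)) ∧ (∀ i, StrictPref (p' i)) ∧
      S.Nonempty ∧ (∀ i ∉ S, p' i = p i) ∧
      (∀ i ∈ S, wpref (p i) (π p' i) (π p i)) ∧
      (∃ i ∈ S, p i (π p' i) (π p i))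

section Aux
variable {O : Type*} [DecidableEq O] [Fintype O]

noncomputable def keyFn (a0 a1 X : Finset O) : ℕ :=
  if X = a0 then 0 else if X = a1 then 1
  else ((Fintype.equivFin (Finset O)) X).val + 2

def topPref (a0 a1 : Finset O) : Pref O := fun A B => keyFn a0 a1 A < keyFn a0 a1 B

lemma keyFn_inj (a0 a1 : Finset O) : Function.Injective (keyFn a0 a1) := by
  intro X Y h
  unfold keyFn at h
  split_ifs at h <;> try omega
  all_goals try (subst_vars; rfl)
  · exact (Fintype.equivFin (Finset O)).injective (Fin.ext (by omega))

lemma strict_topPref (a0 a1 : Finset O) : StrictPref (topPref a0 a1) := by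
  refine ⟨fun A B h h' => absurd h (not_lt.2 h'.le), fun A B C h h' => h.trans h', ?_⟩
  intro A B hne
  rcases lt_or_gt_of_ne (fun hk => hne (keyFn_inj a0 a1 hk)) with h | h
  · exact Or.inl h
  · exact Or.inr h

lemma keyFn_a0 (a0 a1 : Finset O) : keyFn a0 a1 a0 = 0 := by simp [keyFn]

lemma keyFn_a1_le (a0 a1 : Finset O) : keyFn a0 a1 a1 ≤ 1 := by
  unfold keyFn; split_ifs <;> simp_all

lemma keyFn_pos {a0 a1 X : Finset O} (h : X ≠ a0) : 1 ≤ keyFn a0 a1 X := by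
  unfold keyFn; split_ifs with h1 h2
  · exact absurd h1 h
  · omega
  · omega

lemma topPref_top_wpref {a0 a1 X : Finset O} (h : wpref (topPref a0 a1) X a0) : X = a0 := by
  rcases h with he | hlt
  · exact he
  · exfalso; have := keyFn_a0 (O := O) a0 a1; unfold topPref at hlt; omega

lemma topPref_second {a0 a1 X : Finset O} (h : wpref (topPref a0 a1) X a1) :
    X = a1 ∨ X = a0 := by
  rcases h with he | hlt
  · exact Or.inl he
  · by_cases h0 : X = a0
    · exact Or.inr h0
    · exfalso
      have h1 := keyFn_a1_le (O := O) a0 a1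
      have h2 := keyFn_pos (a1 := a1) h0
      unfold topPref at hlt; omega

end Aux

/-- a mechanism is group-strategyproof iff it is strategyproof and
non-bossy. -/
theorem groupSP_iff_SP_and_nonbossy {N O : Type*} [DecidableEq N] [Fintype N]
    [DecidableEq O] [Fintype O]
    (π : (N → Pref O) → N → Finset O) :
    GroupStrategyproof π ↔ Strategyproof π ∧ NonBossy π := by
  constructor
  · intro hG
    constructor
    · -- Strategyproof
      intro p hp i p' hp'
      by_contra hno
      have hne : π p i ≠ π (Function.update p i p') i := fun h => hno (Or.inl h)
      have hlt : p i (π (Function.update p i p') i) (π p i) := by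
        rcases (hp i).2.2 _ _ hne with h | h
        · exact absurd (Or.inr h) hno
        · exact h
      refine hG ⟨p, Function.update p i p', {i}, hp, ?_, ⟨i, Finset.mem_singleton_self i⟩, ?_, ?_, ⟨i, Finset.mem_singleton_self i, hlt⟩⟩
      · intro j
        by_cases hj : j = i
        · subst hj; rw [Function.update_self]; exact hp'
        · rw [Function.update_of_ne hj]; exact hp j
      · intro j hj
        exact Function.update_of_ne (by simpa using hj) _ _
      · intro j hj
        rw [Finset.mem_singleton] at hj; subst hj
        exact Or.inr hlt
    · -- NonBossy
      intro p hp i p' hp' hsame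
      by_contra hne
      obtain ⟨j, hj⟩ := Function.ne_iff.1 hne
      have hji : j ≠ i := fun h => hj (h ▸ hsame)
      set u := Function.update p i p' with hu
      have hust : ∀ k, StrictPref (u k) := by
        intro k
        by_cases hk : k = i
        · subst hk; rw [hu, Function.update_self]; exact hp'
        · rw [hu, Function.update_of_ne hk]; exact hp k
      have huj : u j = p j := Function.update_of_ne hji _ _
      rcases (hp j).2.2 _ _ hj with hcase | hcase
      · -- p j (π u j) (π p j) : coalition {i,j} at true profile p, misreport u
        refine hG ⟨p, u, {i, j}, hp, hust, ⟨i, by simp⟩, ?_, ?_, ⟨j, by simp, hcase⟩⟩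
        · intro k hk
          simp only [Finset.mem_insert, Finset.mem_singleton, not_or] at hk
          exact Function.update_of_ne hk.1 _ _
        · intro k hk
          simp only [Finset.mem_insert, Finset.mem_singleton] at hk
          rcases hk with rfl | rfl
          · exact Or.inl hsame
          · exact Or.inr hcase
      · -- p j (π p j) (π u j) : coalition {i,j} at true profile u, misreport p
        refine hG ⟨u, p, {i, j}, hust, hp, ⟨i, by simp⟩, ?_, ?_, ⟨j, by simp, by rw [huj]; exact hcase⟩⟩
        · intro k hk
          simp only [Finset.mem_insert, Finset.mem_singleton, not_or] at hk
          exact (Function.update_of_ne hk.1 _ _).symm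
        · intro k hk
          simp only [Finset.mem_insert, Finset.mem_singleton] at hk
          rcases hk with rfl | rfl
          · exact Or.inl hsame.symm
          · rw [huj]; exact Or.inr hcase
  · -- SP ∧ NB → GSP
    rintro ⟨hSP, hNB⟩ ⟨p, p', S, hp, hp', -, hout, hweak, i0, hi0, hstr⟩
    set r : N → Pref O := fun i => topPref (π p' i) (π p i) with hr_def
    have hr : ∀ i, StrictPref (r i) := fun i => strict_topPref _ _
    -- chain A: replacing reports p' by r on any finite set keeps the outcome π p'
    have chainA : ∀ T : Finset N, π (fun i => if i ∈ T then r i else p' i) = π p' := by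
      intro T
      induction T using Finset.induction_on with
      | empty => congr 1
      | @insert j T hj ih =>
        set a : N → Pref O := fun i => if i ∈ T then r i else p' i with ha
        set b : N → Pref O := fun i => if i ∈ insert j T then r i else p' i with hb
        have hsa : ∀ i, StrictPref (a i) := by
          intro i; rw [ha]; dsimp only; split_ifs; exacts [hr i, hp' i]
        have hsb : ∀ i, StrictPref (b i) := by
          intro i; rw [hb]; dsimp only; split_ifs; exacts [hr i, hp' i]
        have haj : a j = p' j := by rw [ha]; simp [hj]
        have hbj : b j = r j := by rw [hb]; simp
        have hba : Function.update b j (p' j) = a := by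
          funext k
          by_cases hk : k = j
          · subst hk; rw [Function.update_self, haj]
          · rw [Function.update_of_ne hk, hb, ha]
            simp [Finset.mem_insert, hk]
        have hab : Function.update a j (r j) = b := by
          funext k
          by_cases hk : k = j
          · subst hk; rw [Function.update_self, hbj]
          · rw [Function.update_of_ne hk, hb, ha]
            simp [Finset.mem_insert, hk]
        have h1 := hSP b hsb j (p' j) (hp' j)
        rw [hba, ih, hbj] at h1
        -- h1 : wpref (r j) (π b j) (π p' j)
        have hbj_eq : π b j = π p' j := topPref_top_wpref h1
        have haj_eq : π a j = π p' j := by rw [ih]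
        have := hNB a hsa j (r j) (hr j) (by rw [hab, hbj_eq, haj_eq])
        rw [hab] at this
        rw [this, ih]
    -- chain B: replacing reports p by r on T ⊆ S keeps the outcome π p
    have chainB : ∀ T : Finset N, T ⊆ S → π (fun i => if i ∈ T then r i else p i) = π p := by
      intro T
      induction T using Finset.induction_on with
      | empty => intro _; congr 1
      | @insert j T hj ih =>
        intro hsub
        have hjS : j ∈ S := hsub (Finset.mem_insert_self j T)
        have hTS : T ⊆ S := (Finset.subset_insert j T).trans hsub
        set a : N → Pref O := fun i => if i ∈ T then r i else p i with ha
        set b : N → Pref O := fun i => if i ∈ insert j T then r i else p i with hb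
        have hsa : ∀ i, StrictPref (a i) := by
          intro i; rw [ha]; dsimp only; split_ifs; exacts [hr i, hp i]
        have hsb : ∀ i, StrictPref (b i) := by
          intro i; rw [hb]; dsimp only; split_ifs; exacts [hr i, hp i]
        have haj : a j = p j := by rw [ha]; simp [hj]
        have hbj : b j = r j := by rw [hb]; simp
        have hba : Function.update b j (p j) = a := by
          funext k
          by_cases hk : k = j
          · subst hk; rw [Function.update_self, haj]
          · rw [Function.update_of_ne hk, hb, ha]
            simp [Finset.mem_insert, hk]
        have hab : Function.update a j (r j) = b := by
          funext k
          by_cases hk : k = j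
          · subst hk; rw [Function.update_self, hbj]
          · rw [Function.update_of_ne hk, hb, ha]
            simp [Finset.mem_insert, hk]
        have ihp : π a = π p := ih hTS
        have h1 := hSP a hsa j (r j) (hr j)
        rw [hab, haj, ihp] at h1
        -- h1 : wpref (p j) (π p j) (π b j)
        have h2 := hSP b hsb j (p j) (hp j)
        rw [hba, ihp, hbj] at h2
        -- h2 : wpref (r j) (π b j) (π p j)
        have hcase : π b j = π p j := by
          rcases topPref_second h2 with hc | hc
          · exact hc
          · -- π b j = π p' j
            have heq : π p' j = π p j := by
              rcases h1 with he | hlt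
              · exact (he.trans hc).symm
              · rw [hc] at hlt
                rcases hweak j hjS with he | hlt'
                · exact he
                · exact absurd hlt' ((hp j).1 _ _ hlt)
            rw [hc, heq]
        have haj_eq : π a j = π p j := by rw [ihp]
        have := hNB a hsa j (r j) (hr j) (by rw [hab, hcase, haj_eq])
        rw [hab] at this
        rw [this, ihp]
    have hSS : (fun i => if i ∈ S then r i else p i) = (fun i => if i ∈ S then r i else p' i) := by
      funext i
      split_ifs with h
      · rfl
      · exact (hout i h).symm
    have hfin : π p = π p' := by
      have h1 := chainB S (subset_refl S)
      rw [hSS, chainA S] at h1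
      exact h1.symm
    have hstr' : p i0 (π p i0) (π p i0) := by
      have := congrFun hfin i0
      rwa [← this] at hstr
    exact (hp i0).1 _ _ hstr' hstr'
end

section
/- Under lexicographic preferences, every serial dictatorship quota mechanism is Pareto C-efficient: the allocation it produces, assigning C = Σ q_i objects in total, is not Pareto dominated by any other allocation that assigns exactly C objects. -/
/-- `lexPrefR r X Y`: `X` lexicographically preferred to `Y` under rank `r`
(larger rank = more preferred). -/
def lexPrefR {O : Type*} [DecidableEq O] (r : O → ℕ) (X Y : Finset O) : Prop :=
  ∃ x ∈ X \ Y, ∀ y ∈ Y \ X, r y < r x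

/-- The (at most) `k` objects of `S` with the largest rank under `r`. -/
def topSet {O : Type*} [DecidableEq O] (r : O → ℕ) (S : Finset O) (k : ℕ) : Finset O :=
  S.filter fun x => (S.filter fun y => r x ≤ r y).card ≤ k

/-- Serial dictatorship with quotas: the list gives the sequence of
(dictator, quota) pairs; each dictator takes her top-quota remaining objects
under her rank function. Returns the bundle of agent `b`. -/
def sdRun {A O : Type*} [DecidableEq A] [DecidableEq O]
    (u : A → O → ℕ) : List (A × ℕ) → Finset O → A → Finset O
  | [], _, _ => ∅
  | (a, k) :: rest, S, b =>
    if b = a then topSet (u a) S k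
    else sdRun u rest (S \ topSet (u a) S k) b

/-- Remaining objects after running the serial dictatorship on the list. -/
def sdRem {A O : Type*} [DecidableEq A] [DecidableEq O]
    (u : A → O → ℕ) : List (A × ℕ) → Finset O → Finset O
  | [], S => S
  | (a, k) :: rest, S => sdRem u rest (S \ topSet (u a) S k)

section Aux
open Finset

lemma topSet_subset_aux {O : Type*} [DecidableEq O] (r : O → ℕ) (S : Finset O) (k : ℕ) :
    topSet r S k ⊆ S := filter_subset _ _

lemma rank_lt_of_not_mem_topSet_aux {O : Type*} [DecidableEq O] {r : O → ℕ}
    {S : Finset O} {k : ℕ} {x y : O} (hx : x ∈ S) (hxt : x ∉ topSet r S k)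
    (hy : y ∈ topSet r S k) : r x < r y := by
  simp only [topSet, mem_filter, not_and, not_le] at hxt hy
  have hk := hxt hx
  rcases lt_or_ge (r x) (r y) with h | h
  · exact h
  · exfalso
    have hsub : S.filter (fun z => r x ≤ r z) ⊆ S.filter (fun z => r y ≤ r z) := by
      intro z hz; simp only [mem_filter] at hz ⊢; exact ⟨hz.1, le_trans h hz.2⟩
    have := card_le_card hsub
    omega

lemma card_topSet_aux {O : Type*} [DecidableEq O] {r : O → ℕ}
    (hr : Function.Injective r) (S : Finset O) (k : ℕ) :
    (topSet r S k).card = min k S.card := by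
  set ρ : O → ℕ := fun x => (S.filter fun y => r x ≤ r y).card with hρdef
  have hanti : ∀ x ∈ S, ∀ y ∈ S, r x < r y → ρ y < ρ x := by
    intro x hx y hy hxy
    apply card_lt_card
    rw [Finset.ssubset_iff_of_subset]
    · exact ⟨x, by simp [hx], by simp [hx]; omega⟩
    · intro z hz; simp only [mem_filter] at hz ⊢; exact ⟨hz.1, le_of_lt (lt_of_lt_of_le hxy hz.2)⟩
  have hinj : Set.InjOn ρ S := by
    intro x hx y hy hxy
    by_contra hne
    rcases lt_or_gt_of_ne (fun h => hne (hr h)) with h | h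
    · exact absurd hxy (hanti x hx y hy h).ne'
    · exact absurd hxy (hanti y hy x hx h).ne
  have himg : S.image ρ = Finset.Icc 1 S.card := by
    apply Finset.eq_of_subset_of_card_le
    · intro v hv
      simp only [mem_image] at hv
      obtain ⟨x, hx, rfl⟩ := hv
      simp only [mem_Icc]
      constructor
      · have : x ∈ S.filter fun y => r x ≤ r y := by simp [hx]
        exact card_pos.mpr ⟨x, this⟩
      · exact card_filter_le _ _
    · rw [Nat.card_Icc, card_image_of_injOn hinj]; omega
  have heq : topSet r S k = S.filter (fun x => ρ x ≤ k) := rfl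
  rw [heq]
  have h1 : (S.filter (fun x => ρ x ≤ k)).card
      = ((S.filter (fun x => ρ x ≤ k)).image ρ).card :=
    (card_image_of_injOn (hinj.mono (fun z hz => filter_subset _ _ hz))).symm
  rw [h1]
  have h2 : (S.filter (fun x => ρ x ≤ k)).image ρ = (S.image ρ).filter (· ≤ k) := by
    ext v
    simp only [mem_image, mem_filter]
    constructor
    · rintro ⟨x, ⟨hx, hxk⟩, rfl⟩; exact ⟨⟨x, hx, rfl⟩, hxk⟩
    · rintro ⟨⟨x, hx, rfl⟩, hxk⟩; exact ⟨x, ⟨hx, hxk⟩, rfl⟩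
  rw [h2, himg]
  have h3 : (Finset.Icc 1 S.card).filter (· ≤ k) = Finset.Icc 1 (min k S.card) := by
    ext v; simp only [mem_filter, mem_Icc]; omega
  rw [h3, Nat.card_Icc]
  omega

lemma sdRun_eq_empty_aux {A O : Type*} [DecidableEq A] [DecidableEq O]
    (u : A → O → ℕ) : ∀ (L : List (A × ℕ)) (S : Finset O) (a : A),
    a ∉ L.map Prod.fst → sdRun u L S a = ∅ := by
  intro L
  induction L with
  | nil => intro S a _; rfl
  | cons p rest ih =>
    obtain ⟨b, k⟩ := p
    intro S a ha
    simp only [List.map_cons, List.mem_cons, not_or] at ha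
    simp only [sdRun, if_neg ha.1]
    exact ih _ a ha.2

lemma lexPrefR_irrefl_aux {O : Type*} [DecidableEq O] (r : O → ℕ) (X : Finset O) :
    ¬ lexPrefR r X X := by
  rintro ⟨x, hx, -⟩
  simp at hx

lemma top_subset_of_pref_aux {O : Type*} [DecidableEq O] {r : O → ℕ}
    {S B : Finset O} {k : ℕ} (hB : B ⊆ S)
    (h : B = topSet r S k ∨ lexPrefR r B (topSet r S k)) :
    topSet r S k ⊆ B := by
  rcases h with h | ⟨x, hx, hall⟩
  · exact h ▸ Subset.rfl
  · intro y hy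
    by_contra hyB
    rw [mem_sdiff] at hx
    have h1 : r y < r x := hall y (mem_sdiff.mpr ⟨hy, hyB⟩)
    have h2 : r x < r y := rank_lt_of_not_mem_topSet_aux (hB hx.1) hx.2 hy
    omega

lemma sd_main_aux {A O : Type*} [DecidableEq A] [Fintype A] [DecidableEq O]
    (u : A → O → ℕ) (hu : ∀ a, Function.Injective (u a)) :
    ∀ (L : List (A × ℕ)) (S : Finset O), (L.map Prod.fst).Nodup →
    (L.map Prod.snd).sum ≤ S.card →
    ∀ B : A → Finset O,
      (∀ i j : A, i ≠ j → Disjoint (B i) (B j)) →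
      (∀ a, B a ⊆ S) →
      (∀ a, B a = sdRun u L S a ∨ lexPrefR (u a) (B a) (sdRun u L S a)) →
      (∑ a : A, (B a).card) = (L.map Prod.snd).sum →
      ∀ a, B a = sdRun u L S a := by
  intro L
  induction L with
  | nil =>
    intro S _ _ B _ _ _ hcard a
    simp only [List.map_nil, List.sum_nil] at hcard
    have h0 : (B a).card = 0 := by
      have := Finset.sum_eq_zero_iff.mp hcard a (mem_univ a)
      exact this
    simp only [sdRun]
    exact card_eq_zero.mp h0
  | cons p rest ih =>
    obtain ⟨a, k⟩ := p
    intro S hnd hq B hdisj hsub hpref hcard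
    simp only [List.map_cons, List.nodup_cons] at hnd
    simp only [List.map_cons, List.sum_cons] at hq hcard
    set top := topSet (u a) S k with htopdef
    have htopS : top ⊆ S := topSet_subset_aux _ _ _
    have hcardtop : top.card = k := by
      rw [htopdef, card_topSet_aux (hu a)]; omega
    have hrun_a : sdRun u ((a, k) :: rest) S a = top := by
      simp [sdRun, htopdef]
    have htopB : top ⊆ B a := by
      apply top_subset_of_pref_aux (hsub a)
      have h := hpref a
      rw [hrun_a] at h
      exact h
    set B' : A → Finset O := fun b => if b = a then B a \ top else B b with hB'def
    have hB'sub : ∀ b, B' b ⊆ B b := by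
      intro b; by_cases hb : b = a <;> simp [hB'def, hb, sdiff_subset]
    have hcard' : ∀ b, (B b).card = (B' b).card + (if b = a then k else 0) := by
      intro b
      by_cases hb : b = a
      · have hle := card_le_card htopB
        simp only [hB'def, hb, eq_self_iff_true, if_true]
        rw [card_sdiff_of_subset htopB, hcardtop]
        omega
      · simp [hB'def, hb]
    have hsum' : (∑ b : A, (B' b).card) = (rest.map Prod.snd).sum := by
      have : (∑ b : A, (B b).card)
          = (∑ b : A, (B' b).card) + (∑ b : A, if b = a then k else 0) := by
        rw [← Finset.sum_add_distrib]
        exact Finset.sum_congr rfl fun b _ => hcard' b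
      rw [this] at hcard
      simp only [Finset.sum_ite_eq' Finset.univ a (fun _ => k), mem_univ, if_pos] at hcard
      omega
    have hq' : (rest.map Prod.snd).sum ≤ (S \ top).card := by
      rw [card_sdiff_of_subset htopS, hcardtop]; omega
    have hdisj' : ∀ i j : A, i ≠ j → Disjoint (B' i) (B' j) := by
      intro i j hij
      exact (hdisj i j hij).mono (hB'sub i) (hB'sub j)
    have hsub' : ∀ b, B' b ⊆ S \ top := by
      intro b
      by_cases hb : b = a
      · simp only [hB'def, if_pos hb]
        exact sdiff_subset_sdiff (hsub a) Subset.rfl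
      · simp only [hB'def, if_neg hb]
        rw [Finset.subset_sdiff]
        exact ⟨hsub b, ((hdisj b a hb).mono_right htopB)⟩
    have hrun_ne : ∀ b, b ≠ a → sdRun u ((a, k) :: rest) S b = sdRun u rest (S \ top) b := by
      intro b hb; simp [sdRun, hb, htopdef]
    have hpref' : ∀ b, B' b = sdRun u rest (S \ top) b ∨
        lexPrefR (u b) (B' b) (sdRun u rest (S \ top) b) := by
      intro b
      by_cases hb : b = a
      · rw [hb]
        have hempty : sdRun u rest (S \ top) a = ∅ := sdRun_eq_empty_aux u rest _ a hnd.1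
        rw [hempty]
        simp only [hB'def, if_pos rfl]
        rcases Finset.eq_empty_or_nonempty (B a \ top) with h | ⟨x, hx⟩
        · exact Or.inl h
        · refine Or.inr ⟨x, ?_, ?_⟩
          · simp [hx]
          · intro y hy; simp at hy
      · simp only [hB'def, if_neg hb]
        rw [← hrun_ne b hb]
        exact hpref b
    have hres := ih (S \ top) hnd.2 hq' B' hdisj' hsub' hpref' hsum'
    intro b
    by_cases hb : b = a
    · rw [hb, hrun_a]
      have h1 : B a \ top = ∅ := by
        have h := hres a
        rw [sdRun_eq_empty_aux u rest _ a hnd.1] at h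
        simpa [hB'def] using h
      have h2 : B a ⊆ top := sdiff_eq_empty_iff_subset.mp h1
      exact Subset.antisymm h2 htopB
    · rw [hrun_ne b hb, ← hres b]
      simp [hB'def, hb]

end Aux

/-- under lexicographic preferences, every serial dictatorship quota
mechanism is Pareto C-efficient: its output, assigning $C = Σ qᵢ$ objects, is not
Pareto dominated by any feasible allocation assigning exactly $C$ objects. -/
theorem serialDictatorship_paretoCEfficient {A O : Type*}
    [DecidableEq A] [Fintype A] [DecidableEq O] [Fintype O]
    (u : A → O → ℕ) (hu : ∀ a, Function.Injective (u a))
    (L : List (A × ℕ)) (hnd : (L.map Prod.fst).Nodup)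
    (hq : (L.map Prod.snd).sum ≤ Fintype.card O) :
    ¬ ∃ B : A → Finset O,
        (∀ i j : A, i ≠ j → Disjoint (B i) (B j)) ∧
        (∑ a : A, (B a).card) = (L.map Prod.snd).sum ∧
        (∀ a : A, B a = sdRun u L Finset.univ a ∨
          lexPrefR (u a) (B a) (sdRun u L Finset.univ a)) ∧
        (∃ a : A, lexPrefR (u a) (B a) (sdRun u L Finset.univ a)) := by
  rintro ⟨B, hdisj, hcard, hpref, a, ha⟩
  have hq' : (L.map Prod.snd).sum ≤ (Finset.univ : Finset O).card := by
    rwa [Finset.card_univ]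
  have hall := sd_main_aux u hu L Finset.univ hnd hq' B hdisj
    (fun a => Finset.subset_univ _) hpref hcard
  rw [← hall a] at ha
  exact lexPrefR_irrefl_aux (u a) (B a) ha
end

section
/- Under lexicographic preferences, every sequential dictatorship quota mechanism (where the identity of each successive dictator may depend on the bundles allocated to earlier dictators) is Pareto C-efficient. -/
/-- One run of a sequential dictatorship for `t` steps: the chooser `g` selects
the next dictator as a function of the history of (dictator, bundle) pairs; the
`t`-th dictator takes her top `q t` remaining objects. Returns the history and
the remaining objects. -/
def seqHist {A O : Type*} [DecidableEq A] [DecidableEq O] [Fintype O]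
    (u : A → O → ℕ) (g : List (A × Finset O) → A) (q : ℕ → ℕ) :
    ℕ → List (A × Finset O) × Finset O
  | 0 => ([], Finset.univ)
  | t + 1 =>
    let h := seqHist u g q t
    let a := g h.1
    let T := topSet (u a) h.2 (q t)
    (h.1 ++ [(a, T)], h.2 \ T)

/-- The bundle of agent `b` according to a history. -/
def allocOf {A O : Type*} [DecidableEq A] [DecidableEq O]
    (h : List (A × Finset O)) (b : A) : Finset O :=
  h.foldr (fun p s => if p.1 = b then p.2 ∪ s else s) ∅

section TopSet
variable {O : Type*} [DecidableEq O] {r : O → ℕ} {S : Finset O} {k : ℕ}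

lemma topSet_subset : topSet r S k ⊆ S := Finset.filter_subset _ _

lemma lt_of_not_mem_topSet {x z : O} (hx : x ∈ S) (hx' : x ∉ topSet r S k)
    (hz : z ∈ topSet r S k) : r x < r z := by
  by_contra h
  push_neg at h
  apply hx'
  simp only [topSet, Finset.mem_filter] at hz ⊢
  refine ⟨hx, le_trans (Finset.card_le_card fun y hy => ?_) hz.2⟩
  simp only [Finset.mem_filter] at hy ⊢
  exact ⟨hy.1, le_trans h hy.2⟩

lemma card_topSet_le : (topSet r S k).card ≤ k := by
  by_cases hT : (topSet r S k).Nonempty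
  · obtain ⟨x, hx, hmin⟩ := Finset.exists_min_image (topSet r S k) r hT
    have hsub : topSet r S k ⊆ S.filter (fun y => r x ≤ r y) := fun y hy =>
      Finset.mem_filter.2 ⟨topSet_subset hy, hmin y hy⟩
    have h1 := Finset.card_le_card hsub
    have h2 := (Finset.mem_filter.1 hx).2
    omega
  · simp [Finset.not_nonempty_iff_eq_empty.1 hT]

lemma le_card_topSet (hr : Function.Injective r) (hk : k ≤ S.card) :
    k ≤ (topSet r S k).card := by
  by_contra h
  push_neg at h
  have hne : (S \ topSet r S k).Nonempty := by
    rw [← Finset.card_pos, Finset.card_sdiff_of_subset topSet_subset]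
    omega
  obtain ⟨x, hx, hmax⟩ := Finset.exists_max_image _ r hne
  have hxS := (Finset.mem_sdiff.1 hx).1
  have hxT := (Finset.mem_sdiff.1 hx).2
  apply hxT
  simp only [topSet, Finset.mem_filter]
  refine ⟨hxS, ?_⟩
  have hsub : S.filter (fun y => r x ≤ r y) ⊆ insert x (topSet r S k) := by
    intro y hy
    simp only [Finset.mem_filter] at hy
    by_cases hyT : y ∈ topSet r S k
    · exact Finset.mem_insert_of_mem hyT
    · have hy' : y ∈ S \ topSet r S k := Finset.mem_sdiff.2 ⟨hy.1, hyT⟩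
      have h1 := hmax y hy'
      have h2 : r y = r x := le_antisymm h1 hy.2
      exact Finset.mem_insert.2 (Or.inl (hr h2))
  calc (S.filter (fun y => r x ≤ r y)).card ≤ (insert x (topSet r S k)).card :=
        Finset.card_le_card hsub
    _ ≤ (topSet r S k).card + 1 := Finset.card_insert_le _ _
    _ ≤ k := by omega

lemma card_topSet (hr : Function.Injective r) (hk : k ≤ S.card) :
    (topSet r S k).card = k := le_antisymm card_topSet_le (le_card_topSet hr hk)

end TopSet

section Alloc
variable {A O : Type*} [DecidableEq A] [DecidableEq O]

lemma allocOf_cons (p : A × Finset O) (l : List (A × Finset O)) (b : A) :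
    allocOf (p :: l) b = if p.1 = b then p.2 ∪ allocOf l b else allocOf l b := rfl

lemma allocOf_eq_empty {l : List (A × Finset O)} {b : A}
    (hb : b ∉ l.map Prod.fst) : allocOf l b = ∅ := by
  induction l with
  | nil => rfl
  | cons p l ih =>
      simp only [List.map_cons, List.mem_cons] at hb
      push_neg at hb
      rw [allocOf_cons, if_neg (fun h => hb.1 h.symm), ih hb.2]

lemma allocOf_eq_of_mem {l : List (A × Finset O)} (hl : (l.map Prod.fst).Nodup)
    {a : A} {X : Finset O} (h : (a, X) ∈ l) : allocOf l a = X := by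
  induction l with
  | nil => simp at h
  | cons p l ih =>
      simp only [List.map_cons, List.nodup_cons] at hl
      rcases List.mem_cons.1 h with h | h
      · subst h
        rw [allocOf_cons, if_pos rfl, allocOf_eq_empty hl.1, Finset.union_empty]
      · have hne : p.1 ≠ a := fun he => hl.1 (he ▸ List.mem_map_of_mem (f := Prod.fst) h)
        rw [allocOf_cons, if_neg hne, ih hl.2 h]

end Alloc

section Seq
variable {A O : Type*} [DecidableEq A] [DecidableEq O] [Fintype O]
  (u : A → O → ℕ) (g : List (A × Finset O) → A) (q : ℕ → ℕ)

/-- The `t`-th dictator. -/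
def dict (t : ℕ) : A := g (seqHist u g q t).1

/-- The bundle taken by the `t`-th dictator. -/
def bund (t : ℕ) : Finset O := topSet (u (dict u g q t)) (seqHist u g q t).2 (q t)

lemma seqHist_succ (t : ℕ) :
    seqHist u g q (t+1) = ((seqHist u g q t).1 ++ [(dict u g q t, bund u g q t)],
      (seqHist u g q t).2 \ bund u g q t) := rfl

lemma hist_eq (t : ℕ) :
    (seqHist u g q t).1 = (List.range t).map (fun i => (dict u g q i, bund u g q i)) := by
  induction t with
  | zero => rfl
  | succ t ih =>
      rw [seqHist_succ, List.range_succ, List.map_append, ih]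
      rfl

lemma mem_rem (t : ℕ) (x : O) :
    x ∈ (seqHist u g q t).2 ↔ ∀ i < t, x ∉ bund u g q i := by
  induction t with
  | zero => simp [seqHist]
  | succ t ih =>
      rw [seqHist_succ]
      simp only [Finset.mem_sdiff, ih]
      constructor
      · rintro ⟨h1, h2⟩ i hi
        rcases Nat.lt_succ_iff_lt_or_eq.1 hi with h | h
        · exact h1 i h
        · exact h ▸ h2
      · intro h
        exact ⟨fun i hi => h i (Nat.lt_succ_of_lt hi), h t (Nat.lt_succ_self t)⟩

lemma card_rem (hu : ∀ a, Function.Injective (u a)) {s : ℕ}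
    (hq : (∑ t ∈ Finset.range s, q t) ≤ Fintype.card O) :
    ∀ t ≤ s, (seqHist u g q t).2.card + ∑ i ∈ Finset.range t, q i = Fintype.card O := by
  intro t
  induction t with
  | zero => intro _; simp [seqHist]
  | succ t ih =>
      intro hts
      have hts' : t < s := hts
      have ih' := ih (le_of_lt hts')
      have hsum : (∑ i ∈ Finset.range (t+1), q i) ≤ ∑ i ∈ Finset.range s, q i :=
        Finset.sum_le_sum_of_subset (Finset.range_subset_range.2 hts)
      rw [Finset.sum_range_succ] at hsum
      have hqt : q t ≤ (seqHist u g q t).2.card := by omega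
      have hbc : (bund u g q t).card = q t := card_topSet (hu _) hqt
      rw [seqHist_succ]
      simp only
      rw [Finset.card_sdiff_of_subset (show bund u g q t ⊆ (seqHist u g q t).2 from topSet_subset), hbc,
        Finset.sum_range_succ]
      omega

lemma card_bund (hu : ∀ a, Function.Injective (u a)) {s : ℕ}
    (hq : (∑ t ∈ Finset.range s, q t) ≤ Fintype.card O) {t : ℕ} (hts : t < s) :
    (bund u g q t).card = q t := by
  have ih' := card_rem u g q hu hq t (le_of_lt hts)
  have hsum : (∑ i ∈ Finset.range (t+1), q i) ≤ ∑ i ∈ Finset.range s, q i :=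
    Finset.sum_le_sum_of_subset (Finset.range_subset_range.2 hts)
  rw [Finset.sum_range_succ] at hsum
  exact card_topSet (hu _) (by omega)

end Seq

/-- under lexicographic preferences, every sequential dictatorship
quota mechanism (the next dictator may depend on earlier bundles) is Pareto
C-efficient. -/
theorem sequentialDictatorship_paretoCEfficient {A O : Type*}
    [DecidableEq A] [Fintype A] [DecidableEq O] [Fintype O]
    (u : A → O → ℕ) (hu : ∀ a, Function.Injective (u a))
    (g : List (A × Finset O) → A) (q : ℕ → ℕ) (s : ℕ)
    (hnd : (((seqHist u g q s).1).map Prod.fst).Nodup)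
    (hq : (∑ t ∈ Finset.range s, q t) ≤ Fintype.card O) :
    ¬ ∃ B : A → Finset O,
        (∀ i j : A, i ≠ j → Disjoint (B i) (B j)) ∧
        (∑ a : A, (B a).card) = ∑ t ∈ Finset.range s, q t ∧
        (∀ a : A, B a = allocOf (seqHist u g q s).1 a ∨
          lexPrefR (u a) (B a) (allocOf (seqHist u g q s).1 a)) ∧
        (∃ a : A, lexPrefR (u a) (B a) (allocOf (seqHist u g q s).1 a)) := by
  classical
  rintro ⟨B, hdisj, hcard, hweak, a0, hstrict⟩
  -- the dictators are pairwise distinct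
  have hndm : ((List.range s).map (fun i => dict u g q i)).Nodup := by
    have := hnd
    rw [hist_eq, List.map_map] at this
    exact this
  have hdinj : ∀ i < s, ∀ j < s, dict u g q i = dict u g q j → i = j := by
    intro i hi j hj hij
    exact List.inj_on_of_nodup_map hndm (List.mem_range.2 hi) (List.mem_range.2 hj) hij
  -- the allocation of each dictator is her bundle
  have halloc : ∀ t < s, allocOf (seqHist u g q s).1 (dict u g q t) = bund u g q t := by
    intro t hts
    refine allocOf_eq_of_mem hnd ?_
    rw [hist_eq]
    exact List.mem_map_of_mem (List.mem_range.2 hts)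
  -- key: each dictator's bundle is contained in her B-bundle
  have key : ∀ t < s, bund u g q t ⊆ B (dict u g q t) := by
    intro t
    induction t using Nat.strong_induction_on with
    | _ t ih =>
      intro hts
      have hBsub : B (dict u g q t) ⊆ (seqHist u g q t).2 := by
        intro x hx
        rw [mem_rem]
        intro i hit hxb
        have hsub := ih i hit (lt_trans hit hts)
        have hne : dict u g q i ≠ dict u g q t := fun he =>
          Nat.lt_irrefl t (hdinj i (lt_trans hit hts) t hts he ▸ hit)
        exact (Finset.disjoint_left.1 (hdisj _ _ hne)) (hsub hxb) hx
      rcases hweak (dict u g q t) with h | h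
      · rw [h, halloc t hts]
      · rw [halloc t hts] at h
        obtain ⟨x, hx, hlt⟩ := h
        rw [Finset.mem_sdiff] at hx
        intro y hy
        by_contra hyB
        have h1 := hlt y (Finset.mem_sdiff.2 ⟨hy, hyB⟩)
        have h2 := lt_of_not_mem_topSet (hBsub hx.1) hx.2 hy
        omega
  -- counting
  have hbc : ∀ t < s, (bund u g q t).card = q t := fun t ht => card_bund u g q hu hq ht
  have hinj' : ∀ x ∈ Finset.range s, ∀ y ∈ Finset.range s,
      dict u g q x = dict u g q y → x = y := by
    intro x hx y hy h
    exact hdinj x (Finset.mem_range.1 hx) y (Finset.mem_range.1 hy) h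
  have himg : ∑ t ∈ Finset.range s, (B (dict u g q t)).card =
      ∑ a ∈ (Finset.range s).image (dict u g q), (B a).card :=
    (Finset.sum_image (f := fun a => (B a).card) hinj').symm
  have hle1 : ∑ t ∈ Finset.range s, q t ≤ ∑ t ∈ Finset.range s, (B (dict u g q t)).card := by
    refine Finset.sum_le_sum fun t ht => ?_
    rw [← hbc t (Finset.mem_range.1 ht)]
    exact Finset.card_le_card (key t (Finset.mem_range.1 ht))
  have hle2 : ∑ a ∈ (Finset.range s).image (dict u g q), (B a).card ≤
      ∑ a : A, (B a).card :=
    Finset.sum_le_sum_of_subset (Finset.subset_univ _)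
  have hall : ∑ t ∈ Finset.range s, (B (dict u g q t)).card = ∑ t ∈ Finset.range s, q t := by
    omega
  -- each dictator gets exactly her bundle
  have hBeq : ∀ t < s, B (dict u g q t) = bund u g q t := by
    intro t hts
    have hterm : ∀ i ∈ Finset.range s, q i ≤ (B (dict u g q i)).card := by
      intro i hi
      rw [← hbc i (Finset.mem_range.1 hi)]
      exact Finset.card_le_card (key i (Finset.mem_range.1 hi))
    have heach : (B (dict u g q t)).card = q t := by
      by_contra hne
      have hlt : q t < (B (dict u g q t)).card :=
        lt_of_le_of_ne (hterm t (Finset.mem_range.2 hts)) (Ne.symm hne)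
      have := Finset.sum_lt_sum (s := Finset.range s)
        (f := fun i => q i) (g := fun i => (B (dict u g q i)).card)
        hterm ⟨t, Finset.mem_range.2 hts, hlt⟩
      beta_reduce at this
      omega
    exact (Finset.eq_of_subset_of_card_le (key t hts)
      (by rw [heach, hbc t hts])).symm
  -- non-dictators get nothing
  have hzero : ∀ a : A, (∀ t < s, a ≠ dict u g q t) → B a = ∅ := by
    intro a ha
    have hain : a ∉ (Finset.range s).image (dict u g q) := by
      intro hmem
      obtain ⟨t, ht, hteq⟩ := Finset.mem_image.1 hmem
      exact ha t (Finset.mem_range.1 ht) hteq.symm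
    have hsplit : ∑ a ∈ Finset.univ \ (Finset.range s).image (dict u g q),
        (B a).card = 0 := by
      have := Finset.sum_sdiff (f := fun a => (B a).card)
        (Finset.subset_univ ((Finset.range s).image (dict u g q)))
      beta_reduce at this
      omega
    have := (Finset.sum_eq_zero_iff).1 hsplit a
      (Finset.mem_sdiff.2 ⟨Finset.mem_univ a, hain⟩)
    exact Finset.card_eq_zero.1 this
  -- every agent's B-bundle equals her allocation
  have hBalloc : ∀ a : A, B a = allocOf (seqHist u g q s).1 a := by
    intro a
    by_cases h : ∃ t, t < s ∧ a = dict u g q t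
    · obtain ⟨t, hts, rfl⟩ := h
      rw [hBeq t hts, halloc t hts]
    · push_neg at h
      rw [hzero a h, allocOf_eq_empty]
      intro hmem
      rw [hist_eq, List.map_map] at hmem
      obtain ⟨t, ht, hteq⟩ := List.mem_map.1 hmem
      exact h t (List.mem_range.1 ht) hteq.symm
  -- contradiction with strict improvement
  obtain ⟨x, hx, -⟩ := hstrict
  rw [← hBalloc a0, Finset.sdiff_self] at hx
  exact absurd hx (Finset.notMem_empty x)
end

section
/- Serial dictatorship quota mechanisms are non-bossy: if an agent's misreport leaves her own bundle unchanged, then the entire allocation is unchanged. -/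
theorem sdRun_of_notMem {A O : Type*} [DecidableEq A] [DecidableEq O]
    (u : A → O → ℕ) (a : A) (v : O → ℕ) :
    ∀ (L : List (A × ℕ)), a ∉ L.map Prod.fst → ∀ (S : Finset O) (b : A),
      sdRun (Function.update u a v) L S b = sdRun u L S b
  | [], _, _, _ => rfl
  | (c, k) :: rest, h, S, b => by
    simp only [List.map_cons, List.mem_cons] at h
    push_neg at h
    have hca : c ≠ a := fun e => h.1 e.symm
    have huc : Function.update u a v c = u c := Function.update_of_ne hca _ _
    simp only [sdRun, huc]
    split
    · rfl
    · exact sdRun_of_notMem u a v rest h.2 _ b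

theorem sd_main {A O : Type*} [DecidableEq A] [DecidableEq O]
    (u : A → O → ℕ) (a : A) (v : O → ℕ) :
    ∀ (L : List (A × ℕ)), (L.map Prod.fst).Nodup → ∀ (S : Finset O),
      sdRun (Function.update u a v) L S a = sdRun u L S a →
      ∀ b, sdRun (Function.update u a v) L S b = sdRun u L S b
  | [], _, _, _, _ => rfl
  | (c, k) :: rest, hnd, S, h, b => by
    simp only [List.map_cons, List.nodup_cons] at hnd
    by_cases hca : c = a
    · subst hca
      simp only [sdRun, Function.update_self, if_true, eq_self_iff_true] at h
      simp only [sdRun, Function.update_self]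
      split
      · exact h
      · rw [h]
        exact sdRun_of_notMem u c v rest hnd.1 _ b
    · have huc : Function.update u a v c = u c := Function.update_of_ne hca _ _
      have hac : ¬ a = c := fun e => hca e.symm
      simp only [sdRun, huc, if_neg hac] at h
      simp only [sdRun, huc]
      split
      · rfl
      · exact sd_main u a v rest hnd.2 _ h b

/-- serial dictatorship quota mechanisms are non-bossy: if an
agent's misreport leaves her own bundle unchanged, the entire allocation is
unchanged. -/
theorem serialDictatorship_nonBossy {A O : Type*}
    [DecidableEq A] [Fintype A] [DecidableEq O] [Fintype O]
    (u : A → O → ℕ) (hu : ∀ a, Function.Injective (u a))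
    (L : List (A × ℕ)) (hnd : (L.map Prod.fst).Nodup)
    (a : A) (v : O → ℕ) (hv : Function.Injective v)
    (h : sdRun (Function.update u a v) L Finset.univ a = sdRun u L Finset.univ a) :
    ∀ b : A, sdRun (Function.update u a v) L Finset.univ b
      = sdRun u L Finset.univ b := by
  exact sd_main u a v L hnd Finset.univ h
end

section
/- Under downward lexicographic comparison of random allocations, the Random Serial Dictatorship Quota mechanism is envyfree: at every preference profile, no agent downward-lexicographically prefers another agent's row of the induced stochastic allocation matrix to her own. -/
/-- RSDQ probability that agent `i` receives object `x`: the uniform average,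
over all injective sequences `g` of `s` dictators, of the deterministic serial
dictatorship allocation with quotas `q`. -/
noncomputable def rsdqProb {A O : Type*} [DecidableEq A] [Fintype A]
    [DecidableEq O] [Fintype O]
    (u : A → O → ℕ) {s : ℕ} (q : Fin s → ℕ) (i : A) (x : O) : ℚ :=
  (∑ g : Fin s ↪ A,
      if x ∈ sdRun u (List.ofFn fun k => (g k, q k)) Finset.univ i then (1 : ℚ) else 0)
    / (Fintype.card (Fin s ↪ A))

/-- Agent with rank `r` downward-lexicographically prefers row `B` to row `C`. -/
def dlexPref {O : Type*} (r : O → ℕ) (B C : O → ℚ) : Prop :=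
  ∃ l : O, C l < B l ∧ ∀ k : O, r l < r k → B k = C k

namespace RsdqAux

variable {A O : Type*} [DecidableEq A] [DecidableEq O]

/-- indicator of a finset, ℚ-valued -/
def chi (T : Finset O) : O → ℚ := fun x => if x ∈ T then 1 else 0

/-- lexicographic nonnegativity wrt rank `r` (larger rank = more significant) -/
def LexNonneg (r : O → ℕ) (v : O → ℚ) : Prop :=
  (∀ x, v x = 0) ∨ ∃ l, 0 < v l ∧ ∀ k, r l < r k → v k = 0

theorem lexAdd {r : O → ℕ} (hr : Function.Injective r) {v w : O → ℚ}
    (hv : LexNonneg r v) (hw : LexNonneg r w) :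
    LexNonneg r (fun x => v x + w x) := by
  rcases hv with hv | ⟨l1, h1, h1'⟩
  · rcases hw with hw | ⟨l2, h2, h2'⟩
    · exact Or.inl fun x => by simp [hv x, hw x]
    · exact Or.inr ⟨l2, by simpa [hv l2] using h2, fun k hk => by simp [hv k, h2' k hk]⟩
  · rcases hw with hw | ⟨l2, h2, h2'⟩
    · exact Or.inr ⟨l1, by simpa [hw l1] using h1, fun k hk => by simp [hw k, h1' k hk]⟩
    · rcases lt_trichotomy (r l1) (r l2) with h | h | h
      · refine Or.inr ⟨l2, ?_, fun k hk => by simp [h1' k (h.trans hk), h2' k hk]⟩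
        simpa [h1' l2 h] using h2
      · have : l1 = l2 := hr h
        subst this
        exact Or.inr ⟨l1, by simpa using add_pos h1 h2,
          fun k hk => by simp [h1' k hk, h2' k hk]⟩
      · refine Or.inr ⟨l1, ?_, fun k hk => by simp [h1' k hk, h2' k (h.trans hk)]⟩
        simpa [h2' l1 h] using h1

theorem topSet_subset {r : O → ℕ} {S : Finset O} {k : ℕ} : topSet r S k ⊆ S :=
  Finset.filter_subset _ _

theorem topSet_zero {r : O → ℕ} {S : Finset O} : topSet r S 0 = ∅ := by
  ext x
  simp only [topSet, Finset.mem_filter, Finset.notMem_empty, iff_false, not_and]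
  intro hx h
  have hmem : x ∈ S.filter fun y => r x ≤ r y := Finset.mem_filter.mpr ⟨hx, le_refl _⟩
  have : 0 < (S.filter fun y => r x ≤ r y).card := Finset.card_pos.mpr ⟨x, hmem⟩
  omega

theorem topSet_empty {r : O → ℕ} {k : ℕ} : topSet r (∅ : Finset O) k = ∅ := by
  simp [topSet]

theorem sdRun_subset {u : A → O → ℕ} : ∀ (L : List (A × ℕ)) (S : Finset O) (b : A),
    sdRun u L S b ⊆ S
  | [], S, b => by simp [sdRun]
  | (a, k) :: rest, S, b => by
    rw [sdRun]
    split
    · exact topSet_subset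
    · exact (sdRun_subset rest _ b).trans (Finset.sdiff_subset)

theorem sdRun_empty {u : A → O → ℕ} (L : List (A × ℕ)) (b : A) :
    sdRun u L (∅ : Finset O) b = ∅ :=
  Finset.subset_empty.mp (sdRun_subset L ∅ b)

/-- erasing a chosen element and decrementing the quota -/
theorem topSet_erase {r : O → ℕ} {S : Finset O} {k : ℕ} {x : O}
    (hx : x ∈ topSet r S (k + 1)) :
    topSet r (S.erase x) k = (topSet r S (k + 1)).erase x := by
  obtain ⟨hxS, hxc⟩ := Finset.mem_filter.mp hx
  ext y
  simp only [topSet, Finset.mem_filter, Finset.mem_erase]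
  have hfe : (S.erase x).filter (fun z => r y ≤ r z)
      = ((S.filter fun z => r y ≤ r z).erase x) := by
    rw [Finset.filter_erase]
  constructor
  · rintro ⟨⟨hyx, hyS⟩, hc⟩
    refine ⟨hyx, hyS, ?_⟩
    have : ((S.filter fun z => r y ≤ r z).erase x).card ≤ k := by rw [← hfe]; exact hc
    have h2 := Finset.card_erase_le (s := S.filter fun z => r y ≤ r z) (a := x)
    have h3 := Finset.pred_card_le_card_erase (s := S.filter fun z => r y ≤ r z) (a := x)
    omega
  · rintro ⟨hyx, hyS, hc⟩
    refine ⟨⟨hyx, hyS⟩, ?_⟩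
    rw [hfe]
    by_cases hle : r y ≤ r x
    · have hxf : x ∈ S.filter fun z => r y ≤ r z := Finset.mem_filter.mpr ⟨hxS, hle⟩
      rw [Finset.card_erase_of_mem hxf]
      omega
    · push_neg at hle
      rw [Finset.erase_eq_of_notMem (by simp [Finset.mem_filter]; intro _; omega)]
      -- need : card ≤ k, using subset into erase of x-filter
      have hsub : (S.filter fun z => r y ≤ r z) ⊆ ((S.filter fun z => r x ≤ r z).erase x) := by
        intro z hz
        obtain ⟨hzS, hzr⟩ := Finset.mem_filter.mp hz
        refine Finset.mem_erase.mpr ⟨?_, Finset.mem_filter.mpr ⟨hzS, by omega⟩⟩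
        intro hzx; subst hzx; omega
      have := Finset.card_le_card hsub
      have hxf : x ∈ S.filter fun z => r x ≤ r z := Finset.mem_filter.mpr ⟨hxS, le_refl _⟩
      rw [Finset.card_erase_of_mem hxf] at this
      omega

set_option linter.unusedSectionVars false

theorem sdRun_nil {u : A → O → ℕ} {S : Finset O} {b : A} : sdRun u [] S b = ∅ := rfl

theorem sdRun_cons {u : A → O → ℕ} {a b : A} {k : ℕ} {rest : List (A × ℕ)} {S : Finset O} :
    sdRun u ((a, k) :: rest) S b =
      if b = a then topSet (u a) S k else sdRun u rest (S \ topSet (u a) S k) b := rfl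

/-- the list with `i` and `j` swapped in the first components -/
def mapSwap (i j : A) (L : List (A × ℕ)) : List (A × ℕ) :=
  L.map fun p => (Equiv.swap i j p.1, p.2)

theorem mapSwap_mapSwap {i j : A} (L : List (A × ℕ)) : mapSwap i j (mapSwap i j L) = L := by
  simp [mapSwap, List.map_map, Function.comp_def, Equiv.swap_apply_self]

variable {u : A → O → ℕ} {i j : A}

/-- max element belongs to the topSet for positive quota -/
theorem max_mem_topSet (hui : Function.Injective (u i)) {S : Finset O} {x : O}
    (hxS : x ∈ S) (hmax : ∀ y ∈ S, u i y ≤ u i x) {k : ℕ} :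
    x ∈ topSet (u i) S (k + 1) := by
  refine Finset.mem_filter.mpr ⟨hxS, ?_⟩
  have hsub : (S.filter fun y => u i x ≤ u i y) ⊆ {x} := by
    intro y hy
    obtain ⟨hyS, hyr⟩ := Finset.mem_filter.mp hy
    have : u i y = u i x := le_antisymm (hmax y hyS) hyr
    simp [hui this]
  have := Finset.card_le_card hsub
  simp only [Finset.card_singleton] at this
  omega

/-- Lemma T': i's top set lex-dominates j's top set -/
theorem top_lex (hui : Function.Injective (u i)) :
    ∀ (k : ℕ) (S : Finset O),
      LexNonneg (u i) (fun x => chi (topSet (u i) S k) x - chi (topSet (u j) S k) x) := by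
  intro k
  induction k with
  | zero => intro S; exact Or.inl fun x => by simp [topSet_zero, chi]
  | succ k ih =>
    intro S
    rcases S.eq_empty_or_nonempty with hS | hS
    · subst hS; exact Or.inl fun x => by simp [topSet_empty, chi]
    · obtain ⟨x, hxS, hmax⟩ := S.exists_max_image (u i) hS
      have hxi : x ∈ topSet (u i) S (k + 1) := max_mem_topSet hui hxS hmax
      by_cases hxj : x ∈ topSet (u j) S (k + 1)
      · have e1 := topSet_erase (r := u i) hxi
        have e2 := topSet_erase (r := u j) hxj
        have hfun : (fun y => chi (topSet (u i) (S.erase x) k) y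
              - chi (topSet (u j) (S.erase x) k) y)
            = fun y => chi (topSet (u i) S (k+1)) y - chi (topSet (u j) S (k+1)) y := by
          funext y
          by_cases hyx : y = x
          · subst hyx
            simp [e1, e2, chi, hxi, hxj]
          · simp [e1, e2, chi, Finset.mem_erase, hyx]
        have := ih (S.erase x)
        rwa [hfun] at this
      · refine Or.inr ⟨x, by simp [chi, hxi, hxj], fun y hy => ?_⟩
        have hyS : y ∉ S := fun hyS => absurd (hmax y hyS) (by omega)
        have h1 : y ∉ topSet (u i) S (k+1) := fun h => hyS (topSet_subset h)
        have h2 : y ∉ topSet (u j) S (k+1) := fun h => hyS (topSet_subset h)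
        simp [chi, h1, h2]

/-- Lemma D -/
theorem run_lex (hui : Function.Injective (u i)) :
    ∀ (M : List (A × ℕ)), i ∉ M.map Prod.fst → ∀ (S : Finset O),
      LexNonneg (u i) (fun x => chi (sdRun u (mapSwap i j M) S i) x - chi (sdRun u M S j) x) := by
  intro M
  induction M with
  | nil => intro _ S; exact Or.inl fun x => by simp [mapSwap, sdRun_nil, chi]
  | cons p rest ih =>
    obtain ⟨a, k⟩ := p
    intro hM S
    simp only [List.map_cons, List.mem_cons] at hM
    push_neg at hM
    obtain ⟨hia, hirest⟩ := hM
    by_cases haj : a = j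
    · have h1 : sdRun u (mapSwap i j ((a, k) :: rest)) S i = topSet (u i) S k := by
        simp [mapSwap, sdRun_cons, haj, Equiv.swap_apply_right]
      have h2 : sdRun u ((a, k) :: rest) S j = topSet (u j) S k := by
        simp [sdRun_cons, haj]
      rw [h1]
      simp only [h2]
      exact top_lex hui k S
    · have hsa : Equiv.swap i j a = a :=
        Equiv.swap_apply_of_ne_of_ne (fun h => hia h.symm) haj
      have h1 : sdRun u (mapSwap i j ((a, k) :: rest)) S i
          = sdRun u (mapSwap i j rest) (S \ topSet (u a) S k) i := by
        simp [mapSwap, sdRun_cons, hsa, hia]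
      have hja : j ≠ a := fun h => haj h.symm
      have h2 : sdRun u ((a, k) :: rest) S j
          = sdRun u rest (S \ topSet (u a) S k) j := by
        simp [sdRun_cons, hja]
      rw [h1]
      simp only [h2]
      exact ih hirest _

/-- Lemma C : the key erase-induction claim -/
theorem claimC (hui : Function.Injective (u i)) :
    ∀ (kq : ℕ) (S : Finset O) (M : List (A × ℕ)), i ∉ M.map Prod.fst →
      LexNonneg (u i) (fun x =>
        chi (topSet (u i) S kq) x
          + chi (sdRun u (mapSwap i j M) (S \ topSet (u j) S kq) i) x
          - chi (topSet (u j) S kq) x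
          - chi (sdRun u M (S \ topSet (u i) S kq) j) x) := by
  intro kq
  induction kq with
  | zero =>
    intro S M hM
    have h := run_lex (j := j) hui M hM S
    have hfun : (fun x => chi (sdRun u (mapSwap i j M) S i) x - chi (sdRun u M S j) x)
        = fun x =>
          chi (topSet (u i) S 0) x
            + chi (sdRun u (mapSwap i j M) (S \ topSet (u j) S 0) i) x
            - chi (topSet (u j) S 0) x
            - chi (sdRun u M (S \ topSet (u i) S 0) j) x := by
      funext x
      simp [topSet_zero, chi]
    rwa [hfun] at h
  | succ k ih =>
    intro S M hM
    rcases S.eq_empty_or_nonempty with hS | hS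
    · subst hS
      refine Or.inl fun x => by simp [topSet_empty, sdRun_empty, chi]
    · obtain ⟨x, hxS, hmax⟩ := S.exists_max_image (u i) hS
      have hxi : x ∈ topSet (u i) S (k + 1) := max_mem_topSet hui hxS hmax
      by_cases hxj : x ∈ topSet (u j) S (k + 1)
      · have e1 := topSet_erase (r := u i) hxi
        have e2 := topSet_erase (r := u j) hxj
        have d1 : S.erase x \ topSet (u i) (S.erase x) k = S \ topSet (u i) S (k+1) := by
          rw [e1]
          ext z
          simp only [Finset.mem_sdiff, Finset.mem_erase]
          constructor
          · rintro ⟨⟨hzx, hzS⟩, hz⟩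
            exact ⟨hzS, fun hzT => hz ⟨hzx, hzT⟩⟩
          · rintro ⟨hzS, hz⟩
            have hzx : z ≠ x := fun h => hz (h ▸ hxi)
            exact ⟨⟨hzx, hzS⟩, fun h => hz h.2⟩
        have d2 : S.erase x \ topSet (u j) (S.erase x) k = S \ topSet (u j) S (k+1) := by
          rw [e2]
          ext z
          simp only [Finset.mem_sdiff, Finset.mem_erase]
          constructor
          · rintro ⟨⟨hzx, hzS⟩, hz⟩
            exact ⟨hzS, fun hzT => hz ⟨hzx, hzT⟩⟩
          · rintro ⟨hzS, hz⟩
            have hzx : z ≠ x := fun h => hz (h ▸ hxj)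
            exact ⟨⟨hzx, hzS⟩, fun h => hz h.2⟩
        have h := ih (S.erase x) M hM
        rw [d1, d2, e1, e2] at h
        have hxnotrun1 : x ∉ sdRun u (mapSwap i j M) (S \ topSet (u j) S (k+1)) i := by
          intro hmem
          have := sdRun_subset _ _ _ hmem
          exact (Finset.mem_sdiff.mp this).2 hxj
        have hxnotrun2 : x ∉ sdRun u M (S \ topSet (u i) S (k+1)) j := by
          intro hmem
          have := sdRun_subset _ _ _ hmem
          exact (Finset.mem_sdiff.mp this).2 hxi
        have hfun : (fun y =>
              chi ((topSet (u i) S (k+1)).erase x) y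
                + chi (sdRun u (mapSwap i j M) (S \ topSet (u j) S (k+1)) i) y
                - chi ((topSet (u j) S (k+1)).erase x) y
                - chi (sdRun u M (S \ topSet (u i) S (k+1)) j) y)
            = fun y =>
              chi (topSet (u i) S (k+1)) y
                + chi (sdRun u (mapSwap i j M) (S \ topSet (u j) S (k+1)) i) y
                - chi (topSet (u j) S (k+1)) y
                - chi (sdRun u M (S \ topSet (u i) S (k+1)) j) y := by
          funext y
          by_cases hyx : y = x
          · subst hyx
            simp [chi, hxi, hxj, hxnotrun1, hxnotrun2]
          · simp [chi, Finset.mem_erase, hyx]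
        rwa [hfun] at h
      · refine Or.inr ⟨x, ?_, fun y hy => ?_⟩
        · have hxnotrun2 : x ∉ sdRun u M (S \ topSet (u i) S (k+1)) j := by
            intro hmem
            have := sdRun_subset _ _ _ hmem
            exact (Finset.mem_sdiff.mp this).2 hxi
          have hchi : (0:ℚ) ≤ chi (sdRun u (mapSwap i j M) (S \ topSet (u j) S (k+1)) i) x := by
            unfold chi; positivity
          simp only [chi, hxi, hxj, hxnotrun2, if_true, if_false, if_pos, if_neg,
            not_false_iff]
          simp only [chi] at hchi
          linarith
        · have hyS : y ∉ S := fun hyS => absurd (hmax y hyS) (by omega)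
          have h1 : y ∉ topSet (u i) S (k+1) := fun h => hyS (topSet_subset h)
          have h2 : y ∉ topSet (u j) S (k+1) := fun h => hyS (topSet_subset h)
          have h3 : y ∉ sdRun u (mapSwap i j M) (S \ topSet (u j) S (k+1)) i := by
            intro hmem
            exact hyS (Finset.mem_sdiff.mp (sdRun_subset _ _ _ hmem)).1
          have h4 : y ∉ sdRun u M (S \ topSet (u i) S (k+1)) j := by
            intro hmem
            exact hyS (Finset.mem_sdiff.mp (sdRun_subset _ _ _ hmem)).1
          simp [chi, h1, h2, h3, h4]


/-- MAIN: per-pair lex-domination -/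
theorem mainLex (hui : Function.Injective (u i)) (hij : i ≠ j) :
    ∀ (L : List (A × ℕ)), (L.map Prod.fst).Nodup → ∀ (S : Finset O),
      LexNonneg (u i) (fun x =>
        chi (sdRun u L S i) x + chi (sdRun u (mapSwap i j L) S i) x
          - chi (sdRun u L S j) x - chi (sdRun u (mapSwap i j L) S j) x) := by
  intro L
  induction L with
  | nil => intro _ S; exact Or.inl fun x => by simp [mapSwap, sdRun_nil, chi]
  | cons p rest ih =>
    obtain ⟨a, k⟩ := p
    intro hL S
    simp only [List.map_cons, List.nodup_cons] at hL
    obtain ⟨hafst, hrest⟩ := hL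
    by_cases hai : a = i
    · -- head is i; swapped head is j
      subst hai
      have hja : j ≠ a := Ne.symm hij
      have r1 : sdRun u ((a, k) :: rest) S a = topSet (u a) S k := by simp [sdRun_cons]
      have r2 : sdRun u (mapSwap a j ((a, k) :: rest)) S a
          = sdRun u (mapSwap a j rest) (S \ topSet (u j) S k) a := by
        simp [mapSwap, sdRun_cons, Equiv.swap_apply_left, hij]
      have r3 : sdRun u ((a, k) :: rest) S j
          = sdRun u rest (S \ topSet (u a) S k) j := by
        simp [sdRun_cons, hja]
      have r4 : sdRun u (mapSwap a j ((a, k) :: rest)) S j = topSet (u j) S k := by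
        simp [mapSwap, sdRun_cons, Equiv.swap_apply_left]
      have h := claimC (j := j) hui k S rest hafst
      have hfun : (fun x =>
            chi (topSet (u a) S k) x
              + chi (sdRun u (mapSwap a j rest) (S \ topSet (u j) S k) a) x
              - chi (topSet (u j) S k) x
              - chi (sdRun u rest (S \ topSet (u a) S k) j) x)
          = fun x =>
            chi (sdRun u ((a, k) :: rest) S a) x
              + chi (sdRun u (mapSwap a j ((a, k) :: rest)) S a) x
              - chi (sdRun u ((a, k) :: rest) S j) x
              - chi (sdRun u (mapSwap a j ((a, k) :: rest)) S j) x := by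
        funext x
        rw [r1, r2, r3, r4]
        ring
      rwa [hfun] at h
    · by_cases haj : a = j
      · -- head is j; swapped head is i
        subst haj
        have r1 : sdRun u ((a, k) :: rest) S i
            = sdRun u rest (S \ topSet (u a) S k) i := by
          simp [sdRun_cons, hij]
        have r2 : sdRun u (mapSwap i a ((a, k) :: rest)) S i = topSet (u i) S k := by
          simp [mapSwap, sdRun_cons, Equiv.swap_apply_right]
        have r3 : sdRun u ((a, k) :: rest) S a = topSet (u a) S k := by
          simp [sdRun_cons]
        have r4 : sdRun u (mapSwap i a ((a, k) :: rest)) S a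
            = sdRun u (mapSwap i a rest) (S \ topSet (u i) S k) a := by
          simp [mapSwap, sdRun_cons, Equiv.swap_apply_right, Ne.symm hij]
        have hM2 : i ∉ (mapSwap i a rest).map Prod.fst := by
          intro hmem
          simp only [mapSwap, List.map_map, List.mem_map, Function.comp] at hmem
          obtain ⟨p2, hp2, hp2e⟩ := hmem
          have hq : p2.1 = Equiv.swap i a i := by
            have := congrArg (Equiv.swap i a) hp2e
            rwa [Equiv.swap_apply_self] at this
          rw [Equiv.swap_apply_left] at hq
          exact hafst (hq ▸ List.mem_map_of_mem (f := Prod.fst) hp2)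
        have h := claimC (j := a) hui k S (mapSwap i a rest) hM2
        rw [mapSwap_mapSwap] at h
        have hfun : (fun x =>
              chi (topSet (u i) S k) x
                + chi (sdRun u rest (S \ topSet (u a) S k) i) x
                - chi (topSet (u a) S k) x
                - chi (sdRun u (mapSwap i a rest) (S \ topSet (u i) S k) a) x)
            = fun x =>
              chi (sdRun u ((a, k) :: rest) S i) x
                + chi (sdRun u (mapSwap i a ((a, k) :: rest)) S i) x
                - chi (sdRun u ((a, k) :: rest) S a) x
                - chi (sdRun u (mapSwap i a ((a, k) :: rest)) S a) x := by
          funext x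
          rw [r1, r2, r3, r4]
          ring
        rwa [hfun] at h
      · -- head is neither
        have hsa : Equiv.swap i j a = a := Equiv.swap_apply_of_ne_of_ne hai haj
        have hia : i ≠ a := fun h => hai h.symm
        have hja : j ≠ a := fun h => haj h.symm
        have r1 : sdRun u ((a, k) :: rest) S i
            = sdRun u rest (S \ topSet (u a) S k) i := by simp [sdRun_cons, hia]
        have r2 : sdRun u (mapSwap i j ((a, k) :: rest)) S i
            = sdRun u (mapSwap i j rest) (S \ topSet (u a) S k) i := by
          simp [mapSwap, sdRun_cons, hsa, hia]
        have r3 : sdRun u ((a, k) :: rest) S j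
            = sdRun u rest (S \ topSet (u a) S k) j := by simp [sdRun_cons, hja]
        have r4 : sdRun u (mapSwap i j ((a, k) :: rest)) S j
            = sdRun u (mapSwap i j rest) (S \ topSet (u a) S k) j := by
          simp [mapSwap, sdRun_cons, hsa, hja]
        have h := ih hrest (S \ topSet (u a) S k)
        have hfun : (fun x =>
              chi (sdRun u rest (S \ topSet (u a) S k) i) x
                + chi (sdRun u (mapSwap i j rest) (S \ topSet (u a) S k) i) x
                - chi (sdRun u rest (S \ topSet (u a) S k) j) x
                - chi (sdRun u (mapSwap i j rest) (S \ topSet (u a) S k) j) x)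
            = fun x =>
              chi (sdRun u ((a, k) :: rest) S i) x
                + chi (sdRun u (mapSwap i j ((a, k) :: rest)) S i) x
                - chi (sdRun u ((a, k) :: rest) S j) x
                - chi (sdRun u (mapSwap i j ((a, k) :: rest)) S j) x := by
          funext x
          rw [r1, r2, r3, r4]
        rwa [hfun] at h


theorem lexSum {r : O → ℕ} (hr : Function.Injective r) {ι : Type*} (t : Finset ι)
    (f : ι → O → ℚ) (h : ∀ g ∈ t, LexNonneg r (f g)) :
    LexNonneg r (fun x => ∑ g ∈ t, f g x) := by
  classical
  induction t using Finset.cons_induction with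
  | empty => exact Or.inl fun x => by simp
  | cons a t ha ih =>
    have h1 := h a (Finset.mem_cons_self a t)
    have h2 := ih fun g hg => h g (Finset.mem_cons.mpr (Or.inr hg))
    have h3 := lexAdd hr h1 h2
    have hfun : (fun x => f a x + ∑ g ∈ t, f g x)
        = fun x => ∑ g ∈ Finset.cons a t ha, f g x := by
      funext x; rw [Finset.sum_cons]
    rwa [hfun] at h3

end RsdqAux

open RsdqAux

/-- under downward lexicographic preferences, the Random Serial
Dictatorship Quota mechanism is envyfree: at every profile, no agent
downward-lexicographically prefers another agent's row of the induced random
allocation matrix to her own. -/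
theorem rsdq_envyfree {A O : Type*} [DecidableEq A] [Fintype A]
    [DecidableEq O] [Fintype O]
    (u : A → O → ℕ) (hu : ∀ a, Function.Injective (u a))
    {s : ℕ} (q : Fin s → ℕ)
    (hs : s ≤ Fintype.card A)
    (hq : (∑ k : Fin s, q k) ≤ Fintype.card O) :
    ∀ i j : A, ¬ dlexPref (u i) (rsdqProb u q j) (rsdqProb u q i) := by
  intro i j hd
  obtain ⟨l, hl, hab⟩ := hd
  by_cases hij : i = j
  · subst hij; exact absurd hl (lt_irrefl _)
  classical
  set D : ℚ := (Fintype.card (Fin s ↪ A) : ℚ) with hD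
  set B : (Fin s ↪ A) → A → Finset O :=
    fun g b => sdRun u (List.ofFn fun k => (g k, q k)) Finset.univ b with hB
  set sw : (Fin s ↪ A) → (Fin s ↪ A) :=
    fun g => g.trans (Equiv.swap i j).toEmbedding with hsw
  have hrsdq : ∀ (b : A) (x : O),
      rsdqProb u q b x = (∑ g : Fin s ↪ A, chi (B g b) x) / D := by
    intro b x; rfl
  have hswinv : Function.Involutive sw := by
    intro g
    ext k
    simp [hsw, Equiv.swap_apply_self]
  have hswbij : Function.Bijective sw := hswinv.bijective
  have hLg : ∀ g : Fin s ↪ A,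
      (List.ofFn fun k => ((sw g) k, q k)) = mapSwap i j (List.ofFn fun k => (g k, q k)) := by
    intro g
    simp only [mapSwap, List.map_ofFn]
    rfl
  have hδ : ∀ g : Fin s ↪ A, LexNonneg (u i) (fun x =>
      chi (B g i) x + chi (B (sw g) i) x - chi (B g j) x - chi (B (sw g) j) x) := by
    intro g
    have hnd : (((List.ofFn fun k => (g k, q k)) : List (A × ℕ)).map Prod.fst).Nodup := by
      rw [List.map_ofFn]
      exact (List.nodup_ofFn).mpr g.injective
    have h := mainLex (hu i) hij (List.ofFn fun k => (g k, q k)) hnd Finset.univ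
    rw [← hLg g] at h
    exact h
  have hsum := lexSum (hu i) Finset.univ _ (fun g _ => hδ g)
  have hre : ∀ (b : A) (x : O),
      (∑ g : Fin s ↪ A, chi (B (sw g) b) x) = ∑ g : Fin s ↪ A, chi (B g b) x :=
    fun b x => Fintype.sum_bijective sw hswbij _ _ (fun g => rfl)
  set ci : O → ℚ := fun x => ∑ g : Fin s ↪ A, chi (B g i) x with hci
  set cj : O → ℚ := fun x => ∑ g : Fin s ↪ A, chi (B g j) x with hcj
  have key : ∀ x, (∑ g : Fin s ↪ A,
      (chi (B g i) x + chi (B (sw g) i) x - chi (B g j) x - chi (B (sw g) j) x))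
      = 2 * (ci x - cj x) := by
    intro x
    rw [Finset.sum_sub_distrib, Finset.sum_sub_distrib, Finset.sum_add_distrib,
      hre i x, hre j x]
    simp only [hci, hcj]
    ring
  have hw : LexNonneg (u i) (fun x => ci x - cj x) := by
    rcases hsum with h0 | ⟨l', hp, hz⟩
    · refine Or.inl fun x => ?_
      have h1 := h0 x
      dsimp only at h1 ⊢
      rw [key x] at h1
      linarith
    · refine Or.inr ⟨l', ?_, fun k hk => ?_⟩
      · have h1 := hp
        dsimp only at h1 ⊢
        rw [key l'] at h1
        linarith
      · have h1 := hz k hk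
        dsimp only at h1 ⊢
        rw [key k] at h1
        linarith
  rcases eq_or_ne (Fintype.card (Fin s ↪ A)) 0 with hc | hc
  · have hD0 : D = 0 := by simp [hD, hc]
    rw [hrsdq i l, hrsdq j l, hD0, div_zero, div_zero] at hl
    exact lt_irrefl 0 hl
  · have hDpos : (0:ℚ) < D := by
      rw [hD]
      exact_mod_cast Nat.pos_of_ne_zero hc
    have hcil : ci l < cj l := by
      rw [hrsdq i l, hrsdq j l] at hl
      exact (div_lt_div_iff_of_pos_right hDpos).mp hl
    have habc : ∀ k, u i l < u i k → ci k = cj k := by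
      intro k hk
      have h := hab k hk
      rw [hrsdq j k, hrsdq i k] at h
      rw [div_eq_div_iff hDpos.ne' hDpos.ne'] at h
      have := mul_right_cancel₀ hDpos.ne' h
      exact this.symm
    rcases hw with h0 | ⟨l', hp, hz⟩
    · have := h0 l; simp only at this; linarith
    · rcases lt_trichotomy (u i l) (u i l') with h | h | h
      · have := habc l' h
        simp only at hp
        linarith
      · have hll : l = l' := hu i h
        subst hll
        simp only at hp
        linarith
      · have := hz l h
        simp only at this
        linarith
end

section
/- The Random Serial Dictatorship Quota mechanism satisfies equal treatment of equals: if two agents report identical linear orders over objects and have equal quotas, they receive identical rows of the induced random allocation matrix. -/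
lemma sdRun_perm {A O : Type*} [DecidableEq A] [DecidableEq O]
    (u : A → O → ℕ) (σ : Equiv.Perm A) (hσ : ∀ a, u (σ a) = u a) :
    ∀ (L : List (A × ℕ)) (S : Finset O) (b : A),
      sdRun u (L.map fun p => (σ p.1, p.2)) S (σ b) = sdRun u L S b := by
  intro L
  induction L with
  | nil => intro S b; rfl
  | cons p rest ih =>
    intro S b
    obtain ⟨a, k⟩ := p
    simp only [List.map_cons, sdRun, σ.injective.eq_iff, hσ]
    by_cases h : b = a <;> simp [h, ih]

/-- the Random Serial Dictatorship Quota mechanism satisfies equal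
treatment of equals: two agents reporting identical linear orders, under a quota
system symmetric in their positions (all positional quotas equal), receive
identical rows of the induced random allocation matrix. -/
theorem rsdq_equal_treatment_of_equals {A O : Type*} [DecidableEq A] [Fintype A]
    [DecidableEq O] [Fintype O]
    (u : A → O → ℕ) (hu : ∀ a, Function.Injective (u a))
    {s : ℕ} (q : Fin s → ℕ)
    (hs : s ≤ Fintype.card A)
    (hq : (∑ k : Fin s, q k) ≤ Fintype.card O)
    (hqEq : ∀ k k' : Fin s, q k = q k')
    (i j : A) (hij : u i = u j) :
    ∀ x : O, rsdqProb u q i x = rsdqProb u q j x := by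
  intro x
  set σ := Equiv.swap i j with hσdef
  have hσu : ∀ a, u (σ a) = u a := by
    intro a
    rcases eq_or_ne a i with rfl | hi
    · simp [hσdef, hij]
    rcases eq_or_ne a j with rfl | hj
    · simp [hσdef, hij]
    · simp [hσdef, Equiv.swap_apply_of_ne_of_ne hi hj]
  unfold rsdqProb
  congr 1
  refine Fintype.sum_equiv (Equiv.embeddingCongr (Equiv.refl (Fin s)) σ) _ _ ?_
  intro g
  have key : sdRun u (List.ofFn fun k =>
      ((Equiv.embeddingCongr (Equiv.refl (Fin s)) σ) g k, q k)) Finset.univ j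
      = sdRun u (List.ofFn fun k => (g k, q k)) Finset.univ i := by
    have hofn : (List.ofFn fun k =>
        ((Equiv.embeddingCongr (Equiv.refl (Fin s)) σ) g k, q k))
        = (List.ofFn fun k => (g k, q k)).map (fun p => (σ p.1, p.2)) := by
      simp only [List.map_ofFn]
      rfl
    rw [hofn]
    have := sdRun_perm u σ hσu (List.ofFn fun k => (g k, q k)) Finset.univ i
    simpa [hσdef, Equiv.swap_apply_left] using this
  rw [key]
end
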